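/- The ring homomorphism ε : ℬ → 𝒜 determined by h ↦ ξ (i.e. h_{2^i - 1} ↦ ξᵢ and hₙ ↦ 0 if n+1 is not a power of 2) is a morphism of bialgebras from the Faà di Bruno Hopf algebra to the extended dual Steenrod algebra. -/

import Mathlib

open scoped TensorProduct

/-- Substitution (composition) of formal power series: `comp f g = f(g(x))`. -/
noncomputable def comp {R : Type*} [CommRing R] (f g : PowerSeries R) : PowerSeries R :=
  PowerSeries.mk fun n =>
    ∑ k ∈ Finset.range (n + 1), PowerSeries.coeff (R := R) k f * PowerSeries.coeff (R := R) n (g ^ k)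

/-- The Faà di Bruno Hopf algebra `ℬ = ℤ/2[h₀^{±1}, h₁, h₂, ...]` (as a ring). -/
noncomputable abbrev FaaDiBruno : Type :=
  Localization.Away (MvPolynomial.X 0 : MvPolynomial ℕ (ZMod 2))

/-- The generator `hₙ` of the Faà di Bruno Hopf algebra. -/
noncomputable def hgen (n : ℕ) : FaaDiBruno :=
  algebraMap (MvPolynomial ℕ (ZMod 2)) FaaDiBruno (MvPolynomial.X n)

/-- The power series `h(x) = Σₙ hₙ x^{n+1}` over `ℬ`. -/
noncomputable def hSeries : PowerSeries FaaDiBruno :=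
  PowerSeries.mk fun n => if n = 0 then 0 else hgen (n - 1)

/-- The extended dual Steenrod algebra `𝒜 = ℤ/2[ξ₀^{±1}, ξ₁, ξ₂, ...]`. -/
noncomputable abbrev DualSteenrod : Type :=
  Localization.Away (MvPolynomial.X 0 : MvPolynomial ℕ (ZMod 2))

/-- The generator `ξᵢ` of the extended dual Steenrod algebra. -/
noncomputable def xi (i : ℕ) : DualSteenrod :=
  algebraMap (MvPolynomial ℕ (ZMod 2)) DualSteenrod (MvPolynomial.X i)

open scoped Classical in
/-- The power series `ξ(x) = Σᵢ ξᵢ x^{2^i}` over `𝒜`. -/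
noncomputable def xiSeries : PowerSeries DualSteenrod :=
  PowerSeries.mk fun n => if ∃ i : ℕ, n = 2 ^ i then xi (Nat.log 2 n) else 0

lemma map_comp' {R S : Type*} [CommRing R] [CommRing S] (f : R →+* S) (a b : PowerSeries R) :
    PowerSeries.map f (comp a b) = comp (PowerSeries.map f a) (PowerSeries.map f b) := by
  ext n
  simp only [comp, PowerSeries.coeff_map, PowerSeries.coeff_mk, map_sum, map_mul]
  refine Finset.sum_congr rfl fun k _ => ?_
  rw [← map_pow, PowerSeries.coeff_map]

lemma pmap_comp {R S T : Type*} [CommRing R] [CommRing S] [CommRing T]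
    (f : R →+* S) (g : S →+* T) (a : PowerSeries R) :
    PowerSeries.map (g.comp f) a = PowerSeries.map g (PowerSeries.map f a) := by
  ext n
  simp [PowerSeries.coeff_map]

lemma faa_ringHom_ext {S : Type*} [CommRing S]
    (f g : FaaDiBruno →+* S) (h : ∀ n, f (hgen n) = g (hgen n)) : f = g := by
  apply IsLocalization.ringHom_ext
    (Submonoid.powers (MvPolynomial.X 0 : MvPolynomial ℕ (ZMod 2)))
  apply MvPolynomial.ringHom_ext
  · intro r
    exact RingHom.congr_fun
      (RingHom.ext_zmod
        ((f.comp (algebraMap (MvPolynomial ℕ (ZMod 2)) FaaDiBruno)).comp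
          (MvPolynomial.C : ZMod 2 →+* MvPolynomial ℕ (ZMod 2)))
        ((g.comp (algebraMap (MvPolynomial ℕ (ZMod 2)) FaaDiBruno)).comp
          (MvPolynomial.C : ZMod 2 →+* MvPolynomial ℕ (ZMod 2)))) r
  · intro n
    exact h n

open scoped Classical in
lemma hε_coeff (ε : FaaDiBruno →ₐ[ZMod 2] DualSteenrod)
    (hε : PowerSeries.map ε.toRingHom hSeries = xiSeries) (m : ℕ) :
    ε (hgen m) = if ∃ i, m + 1 = 2 ^ i then xi (Nat.log 2 (m + 1)) else 0 := by
  classical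
  have := congrArg (PowerSeries.coeff (m + 1)) hε
  simp only [PowerSeries.coeff_map, hSeries, xiSeries, PowerSeries.coeff_mk] at this
  simpa using this

set_option maxHeartbeats 2000000 in
/-- The ring homomorphism `ε : ℬ → 𝒜` determined by `h ↦ ξ` (i.e. `h_{2^i-1} ↦ ξᵢ` and
`hₙ ↦ 0` if `n+1` is not a power of 2) is a morphism of bialgebras from the Faà di Bruno
Hopf algebra to the extended dual Steenrod algebra. -/
theorem thomReduction_bialgebra_hom
    (δB : FaaDiBruno →ₐ[ZMod 2] FaaDiBruno ⊗[ZMod 2] FaaDiBruno)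
    (hδB : PowerSeries.map δB.toRingHom hSeries =
      comp (PowerSeries.map (Algebra.TensorProduct.includeLeft :
              FaaDiBruno →ₐ[ZMod 2] FaaDiBruno ⊗[ZMod 2] FaaDiBruno).toRingHom hSeries)
           (PowerSeries.map (Algebra.TensorProduct.includeRight :
              FaaDiBruno →ₐ[ZMod 2] FaaDiBruno ⊗[ZMod 2] FaaDiBruno).toRingHom hSeries))
    (δA : DualSteenrod →ₐ[ZMod 2] DualSteenrod ⊗[ZMod 2] DualSteenrod)
    (hδA : PowerSeries.map δA.toRingHom xiSeries =
      comp (PowerSeries.map (Algebra.TensorProduct.includeLeft :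
              DualSteenrod →ₐ[ZMod 2] DualSteenrod ⊗[ZMod 2] DualSteenrod).toRingHom xiSeries)
           (PowerSeries.map (Algebra.TensorProduct.includeRight :
              DualSteenrod →ₐ[ZMod 2] DualSteenrod ⊗[ZMod 2] DualSteenrod).toRingHom xiSeries))
    (εB : FaaDiBruno →ₐ[ZMod 2] ZMod 2)
    (hεB0 : εB (hgen 0) = 1) (hεBn : ∀ n : ℕ, 1 ≤ n → εB (hgen n) = 0)
    (εA : DualSteenrod →ₐ[ZMod 2] ZMod 2)
    (hεA0 : εA (xi 0) = 1) (hεAi : ∀ i : ℕ, 1 ≤ i → εA (xi i) = 0)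
    (ε : FaaDiBruno →ₐ[ZMod 2] DualSteenrod)
    (hε : PowerSeries.map ε.toRingHom hSeries = xiSeries) :
    (∀ a : FaaDiBruno, (Algebra.TensorProduct.map ε ε) (δB a) = δA (ε a)) ∧
    (∀ a : FaaDiBruno, εA (ε a) = εB a) := by
  classical
  -- coefficient facts about ε on generators
  have hεc := hε_coeff ε hε
  constructor
  · -- compatibility with comultiplication
    set E := (Algebra.TensorProduct.map ε ε : FaaDiBruno ⊗[ZMod 2] FaaDiBruno →ₐ[ZMod 2]
      DualSteenrod ⊗[ZMod 2] DualSteenrod) with hE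
    have hm : ∀ a b : PowerSeries (FaaDiBruno ⊗[ZMod 2] FaaDiBruno),
        PowerSeries.map E.toRingHom (comp a b) =
        comp (PowerSeries.map E.toRingHom a) (PowerSeries.map E.toRingHom b) := by
      intro a b
      ext n
      simp only [comp, PowerSeries.coeff_map, PowerSeries.coeff_mk, map_sum, map_mul]
      refine Finset.sum_congr rfl fun k _ => ?_
      rw [← map_pow, PowerSeries.coeff_map]
    have keyL : PowerSeries.map E.toRingHom
        (PowerSeries.map (Algebra.TensorProduct.includeLeft : FaaDiBruno →ₐ[ZMod 2]
          FaaDiBruno ⊗[ZMod 2] FaaDiBruno).toRingHom hSeries) =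
        PowerSeries.map (Algebra.TensorProduct.includeLeft : DualSteenrod →ₐ[ZMod 2]
          DualSteenrod ⊗[ZMod 2] DualSteenrod).toRingHom xiSeries := by
      rw [← hε]
      ext n
      simp [PowerSeries.coeff_map, hE, Algebra.TensorProduct.map_tmul]
    have keyR : PowerSeries.map E.toRingHom
        (PowerSeries.map (Algebra.TensorProduct.includeRight : FaaDiBruno →ₐ[ZMod 2]
          FaaDiBruno ⊗[ZMod 2] FaaDiBruno).toRingHom hSeries) =
        PowerSeries.map (Algebra.TensorProduct.includeRight : DualSteenrod →ₐ[ZMod 2]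
          DualSteenrod ⊗[ZMod 2] DualSteenrod).toRingHom xiSeries := by
      rw [← hε]
      ext n
      simp [PowerSeries.coeff_map, hE, Algebra.TensorProduct.map_tmul]
    have main : PowerSeries.map E.toRingHom (PowerSeries.map δB.toRingHom hSeries) =
        PowerSeries.map δA.toRingHom (PowerSeries.map ε.toRingHom hSeries) := by
      rw [hδB, hm, keyL, keyR, hε, hδA]
    have hgen_eq : ∀ m : ℕ, E (δB (hgen m)) = δA (ε (hgen m)) := by
      intro m
      have := congrArg (PowerSeries.coeff (m + 1)) main
      simpa [PowerSeries.coeff_map, hSeries] using this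
    have hres : ∀ p : MvPolynomial ℕ (ZMod 2),
        E (δB (algebraMap (MvPolynomial ℕ (ZMod 2)) FaaDiBruno p)) =
        δA (ε (algebraMap (MvPolynomial ℕ (ZMod 2)) FaaDiBruno p)) := by
      intro p
      have hext : (E.toRingHom.comp δB.toRingHom).comp
            (algebraMap (MvPolynomial ℕ (ZMod 2)) FaaDiBruno) =
          (δA.toRingHom.comp ε.toRingHom).comp
            (algebraMap (MvPolynomial ℕ (ZMod 2)) FaaDiBruno) := by
        apply MvPolynomial.ringHom_ext
        · intro r
          exact RingHom.congr_fun (RingHom.ext_zmod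
            (((E.toRingHom.comp δB.toRingHom).comp
              (algebraMap (MvPolynomial ℕ (ZMod 2)) FaaDiBruno)).comp
              (MvPolynomial.C : ZMod 2 →+* MvPolynomial ℕ (ZMod 2)))
            (((δA.toRingHom.comp ε.toRingHom).comp
              (algebraMap (MvPolynomial ℕ (ZMod 2)) FaaDiBruno)).comp
              (MvPolynomial.C : ZMod 2 →+* MvPolynomial ℕ (ZMod 2)))) r
        · intro n
          exact hgen_eq n
      exact RingHom.congr_fun hext p
    intro a
    obtain ⟨⟨p, s⟩, hs⟩ := IsLocalization.surj
      (Submonoid.powers (MvPolynomial.X 0 : MvPolynomial ℕ (ZMod 2))) a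
    have hu : IsUnit (δA (ε (algebraMap (MvPolynomial ℕ (ZMod 2)) FaaDiBruno
        (s : MvPolynomial ℕ (ZMod 2))))) :=
      (IsLocalization.map_units FaaDiBruno s).map (δA.comp ε)
    apply hu.mul_right_cancel
    have h1 := congrArg (fun x => E (δB x)) hs
    have h2 := congrArg (fun x => δA (ε x)) hs
    simp only [map_mul] at h1 h2
    rw [h2, ← hres p, ← hres (s : MvPolynomial ℕ (ZMod 2)), ← h1]
  · -- compatibility with counits
    have : εA.toRingHom.comp ε.toRingHom = εB.toRingHom := by
      apply faa_ringHom_ext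
      intro n
      show εA (ε (hgen n)) = εB (hgen n)
      rw [hεc n]
      rcases Nat.eq_zero_or_pos n with rfl | hn
      · have hex : ∃ i, 0 + 1 = 2 ^ i := ⟨0, rfl⟩
        simp [hex, hεA0, hεB0]
      · rw [hεBn n hn]
        split_ifs with hi
        · obtain ⟨i, hi⟩ := hi
          have hi1 : 1 ≤ i := by
            rcases Nat.eq_zero_or_pos i with rfl | h
            · omega
            · exact h
          have hlog : Nat.log 2 (n + 1) = i := by
            rw [hi]; exact Nat.log_pow one_lt_two i
          rw [hlog, hεAi i hi1]
        · simp
    intro a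
    exact RingHom.congr_fun this a
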